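/- arXiv:1809.02389 — 4 statements merged into one kernel-verified Lean document; each statement's English description precedes it below -/
import Mathlib

section
/- For arbitrary strict partitions λ and μ (not necessarily satisfying μ ⊆ λ), one has |λ| − |μ| = Σ_{k ∈ W^B(μ,λ)} x_k^B, where for the strict partition λ one defines the integers x_k^B = λ_k for 1 ≤ k ≤ ℓ(λ) and x_k^B = λ'_k − k for k > ℓ(λ). -/
attribute [local instance] Classical.propDecidable

/-- `l : ℕ → ℕ` encodes a strict partition: the parts are `l 1 > l 2 > ⋯ > l ℓ > 0`
(indexed from `1`), with `l i = 0` for `i > ℓ` (and `l 0 = 0` by convention). -/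
def IsStrictPartition (l : ℕ → ℕ) : Prop :=
  l 0 = 0 ∧ ∀ i, 1 ≤ i → (l i = 0 → l (i + 1) = 0) ∧ (l i ≠ 0 → l (i + 1) < l i)

/-- The shifted diagram of type B: cells `(i,j)` with `1 ≤ i ≤ ℓ(λ)` and
`i ≤ j ≤ λ_i + i - 1`.  (For a strict partition all such cells satisfy
`i ≤ l 1` and `j ≤ 2 * l 1 + 2`, so the ambient box loses nothing.) -/
noncomputable def cellsB (l : ℕ → ℕ) : Finset (ℕ × ℕ) :=
  (Finset.Icc 1 (l 1) ×ˢ Finset.Icc 1 (2 * l 1 + 2)).filter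
    (fun p => p.1 ≤ p.2 ∧ p.2 < l p.1 + p.1)

/-- The shifted diagram of type D: cells `(i,j)` with `1 ≤ i ≤ ℓ(λ)` and
`i + 1 ≤ j ≤ λ_i + i`. -/
noncomputable def cellsD (l : ℕ → ℕ) : Finset (ℕ × ℕ) :=
  (Finset.Icc 1 (l 1) ×ˢ Finset.Icc 1 (2 * l 1 + 2)).filter
    (fun p => p.1 < p.2 ∧ p.2 ≤ l p.1 + p.1)

/-- `λ'_k`: the number of cells of `[λ]^B` in column `k`. -/
noncomputable def colB (l : ℕ → ℕ) (k : ℕ) : ℕ :=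
  ((cellsB l).filter (fun p => p.2 = k)).card

/-- The size `|λ|` of a strict partition. -/
noncomputable def spSize (l : ℕ → ℕ) : ℕ := ∑ i ∈ Finset.Icc 1 (l 1), l i

/-- The length `ℓ(λ)` (number of nonzero parts) of a strict partition. -/
noncomputable def spLength (l : ℕ → ℕ) : ℕ :=
  ((Finset.Icc 1 (l 1)).filter (fun i => l i ≠ 0)).card

/-- `μ ⋖ ν` for strict partitions (containment via type B diagrams and `|ν| = |μ| + 1`). -/
def CoversB (m n : ℕ → ℕ) : Prop :=
  cellsB m ⊆ cellsB n ∧ spSize n = spSize m + 1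

/-- `μ ⋖ ν` for strict partitions (containment via type D diagrams and `|ν| = |μ| + 1`). -/
def CoversD (m n : ℕ → ℕ) : Prop :=
  cellsD m ⊆ cellsD n ∧ spSize n = spSize m + 1

/-- An excited move of type B with respect to `λ`. -/
def ExcitedMoveB (l : ℕ → ℕ) (D D' : Finset (ℕ × ℕ)) : Prop :=
  ∃ i j : ℕ, (i, j) ∈ D ∧
    (i + 1, j) ∈ cellsB l ∧ (i + 1, j) ∉ D ∧
    (i, j + 1) ∈ cellsB l ∧ (i, j + 1) ∉ D ∧
    (i + 1, j + 1) ∈ cellsB l ∧ (i + 1, j + 1) ∉ D ∧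
    D' = insert (i + 1, j + 1) (D.erase (i, j))

/-- The excited diagrams of type B of shape `λ/μ`: subsets of `[λ]^B` obtainable from
`[μ]^B` by finite sequences of excited moves of type B. -/
noncomputable def EB (l m : ℕ → ℕ) : Finset (Finset (ℕ × ℕ)) :=
  (cellsB l).powerset.filter
    (fun D => Relation.ReflTransGen (ExcitedMoveB l) (cellsB m) D)

/-- An excited move of type D with respect to `λ`. -/
def ExcitedMoveD (l : ℕ → ℕ) (D D' : Finset (ℕ × ℕ)) : Prop :=
  (∃ i j : ℕ, i + 1 < j ∧ (i, j) ∈ D ∧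
    (i + 1, j) ∈ cellsD l ∧ (i + 1, j) ∉ D ∧
    (i, j + 1) ∈ cellsD l ∧ (i, j + 1) ∉ D ∧
    (i + 1, j + 1) ∈ cellsD l ∧ (i + 1, j + 1) ∉ D ∧
    D' = insert (i + 1, j + 1) (D.erase (i, j))) ∨
  (∃ i : ℕ, (i, i + 1) ∈ D ∧
    (i, i + 2) ∈ cellsD l ∧ (i, i + 2) ∉ D ∧
    (i, i + 3) ∈ cellsD l ∧ (i, i + 3) ∉ D ∧
    (i + 1, i + 2) ∈ cellsD l ∧ (i + 1, i + 2) ∉ D ∧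
    (i + 1, i + 3) ∈ cellsD l ∧ (i + 1, i + 3) ∉ D ∧
    (i + 2, i + 3) ∈ cellsD l ∧ (i + 2, i + 3) ∉ D ∧
    D' = insert (i + 2, i + 3) (D.erase (i, i + 1)))

/-- The excited diagrams of type D of shape `λ/μ`. -/
noncomputable def ED (l m : ℕ → ℕ) : Finset (Finset (ℕ × ℕ)) :=
  (cellsD l).powerset.filter
    (fun D => Relation.ReflTransGen (ExcitedMoveD l) (cellsD m) D)

/-- The set `W^B(μ, λ)`: all `1 ≤ k ≤ ℓ(λ)` with `λ_k ≠ μ_i` for all `i ≥ 1`, together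
with all `k ≥ ℓ(λ) + 1` with `λ'_k - k ≠ μ'_i - i` for all `i ≥ 1`.  (All its elements
are at most `λ_1 + μ_1 + 2`, so the ambient interval loses nothing.) -/
noncomputable def WB (m l : ℕ → ℕ) : Finset ℕ :=
  (Finset.Icc 1 (l 1 + m 1 + 2)).filter (fun k =>
    (k ≤ spLength l ∧ ∀ i, 1 ≤ i → l k ≠ m i) ∨
    (spLength l + 1 ≤ k ∧ ∀ i, 1 ≤ i → (colB l k : ℤ) - k ≠ (colB m i : ℤ) - i))

/-- The set `W^D(μ, λ)`. -/
noncomputable def WD (m l : ℕ → ℕ) : Finset ℕ :=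
  (Finset.Icc 1 (l 1 + m 1 + 3)).filter (fun k =>
    (k ≤ spLength l ∧ ∀ i, 1 ≤ i → l k ≠ m i) ∨
    (k = spLength l + 1 ∧ Odd ((spLength l : ℤ) - (spLength m : ℤ))) ∨
    (spLength l + 2 ≤ k ∧ ∀ i, 1 ≤ i → (colB l k : ℤ) - k ≠ (colB m i : ℤ) - i))

/-- The type B hook length of a cell of `[λ]^B`. -/
noncomputable def hB (l : ℕ → ℕ) (p : ℕ × ℕ) : ℤ :=
  if p.1 = p.2 then (l p.1 : ℤ)
  else if p.2 ≤ spLength l then (l p.1 : ℤ) + (l p.2 : ℤ)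
  else ((l p.1 : ℤ) + (p.1 : ℤ) - (p.2 : ℤ)) + ((colB l p.2 : ℤ) - (p.1 : ℤ))

/-- The type D hook length of a cell of `[λ]^D`. -/
noncomputable def hD (l : ℕ → ℕ) (p : ℕ × ℕ) : ℤ :=
  if p.2 ≤ spLength l then (l p.1 : ℤ) + (l p.2 : ℤ)
  else ((l p.1 : ℤ) + (p.1 : ℤ) - (p.2 : ℤ) + 1) + ((colB l (p.2 - 1) : ℤ) - (p.1 : ℤ))

/-- A standard Young tableau on a finite set of cells, encoded as `T : ℕ × ℕ → ℕ`
which is `0` off the cells and restricts to a bijection onto `{1, …, n}`,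
increasing along rows and columns. -/
def IsSYT (cells : Finset (ℕ × ℕ)) (T : ℕ × ℕ → ℕ) : Prop :=
  Set.BijOn T ↑cells ↑(Finset.Icc 1 cells.card) ∧
  (∀ p, p ∉ cells → T p = 0) ∧
  (∀ i j : ℕ, (i, j) ∈ cells → (i, j + 1) ∈ cells → T (i, j) < T (i, j + 1)) ∧
  (∀ i j : ℕ, (i, j) ∈ cells → (i + 1, j) ∈ cells → T (i, j) < T (i + 1, j))

/-- The skew diagram `[λ]^B ∖ [μ]^B`. -/
noncomputable def skewB (l m : ℕ → ℕ) : Finset (ℕ × ℕ) := cellsB l \ cellsB m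

/-- The skew diagram `[λ]^D ∖ [μ]^D`. -/
noncomputable def skewD (l m : ℕ → ℕ) : Finset (ℕ × ℕ) := cellsD l \ cellsD m

/-- `f^{λ/μ}`: the number of standard Young tableaux of shifted skew shape `λ/μ`
(type B diagrams). -/
noncomputable def fB (l m : ℕ → ℕ) : ℕ :=
  Nat.card {T : ℕ × ℕ → ℕ // IsSYT (skewB l m) T}

/-- `f^{λ/μ}` via the type D diagrams. -/
noncomputable def fD (l m : ℕ → ℕ) : ℕ :=
  Nat.card {T : ℕ × ℕ → ℕ // IsSYT (skewD l m) T}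

/-- `x_k^B = λ_k` for `k ≤ ℓ(λ)` and `x_k^B = λ'_k - k` for `k > ℓ(λ)`. -/
noncomputable def xB (l : ℕ → ℕ) (k : ℕ) : ℤ :=
  if k ≤ spLength l then (l k : ℤ) else (colB l k : ℤ) - (k : ℤ)

/-- `x_k^D = λ_k` for `k ≤ ℓ(λ)` and `x_k^D = λ'_{k-1} - k + 1` for `k > ℓ(λ)`. -/
noncomputable def xD (l : ℕ → ℕ) (k : ℕ) : ℤ :=
  if k ≤ spLength l then (l k : ℤ) else (colB l (k - 1) : ℤ) - (k : ℤ) + 1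

/-- The weighted type B hook length `h^B(u; z)`: the sum of `z_{c(v)}` over the cells `v`
of the type B hook of `u` (the diagonal cell `(j,j)` counted twice when `i < j ≤ ℓ(λ)`). -/
noncomputable def hBz (l : ℕ → ℕ) (z : ℕ → ℝ) (u : ℕ × ℕ) : ℝ :=
  (∑ p ∈ (cellsB l).filter (fun p => p.1 = u.1 ∧ u.2 ≤ p.2), z (p.2 - p.1)) +
  (∑ p ∈ (cellsB l).filter (fun p => p.2 = u.2 ∧ u.1 < p.1), z (p.2 - p.1)) +
  (if u.1 < u.2 ∧ u.2 ≤ spLength l then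
      ∑ p ∈ (cellsB l).filter (fun p => p.1 = u.2), z (p.2 - p.1)
    else 0)

/-- The weighted type D hook length `h^D(u; z)`. -/
noncomputable def hDz (l : ℕ → ℕ) (z : ℕ → ℝ) (u : ℕ × ℕ) : ℝ :=
  (∑ p ∈ (cellsD l).filter (fun p => p.1 = u.1 ∧ u.2 ≤ p.2), z (p.2 - p.1)) +
  (∑ p ∈ (cellsD l).filter (fun p => p.2 = u.2 ∧ u.1 < p.1), z (p.2 - p.1)) +
  (∑ p ∈ (cellsD l).filter (fun p => p.1 = u.2), z (p.2 - p.1))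

/-- The weight `T_z` of a standard Young tableau `T` on `cells` (with `n = |cells|`):
`∏_{k=1}^n (z_{c(T⁻¹(n))} + ⋯ + z_{c(T⁻¹(k))})⁻¹`. -/
noncomputable def Tz (cells : Finset (ℕ × ℕ)) (z : ℕ → ℝ) (T : ℕ × ℕ → ℕ) : ℝ :=
  ∏ k ∈ Finset.Icc 1 cells.card,
    (∑ p ∈ cells.filter (fun p => k ≤ T p), z (p.2 - p.1))⁻¹

/-- `x_k^B(z) = z_0 + ⋯ + z_{λ_k - 1}` for `k ≤ ℓ(λ)`, and
`x_k^B(z) = -(z_0 + ⋯ + z_{k - λ'_k - 1})` for `k > ℓ(λ)`. -/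
noncomputable def xBz (l : ℕ → ℕ) (z : ℕ → ℝ) (k : ℕ) : ℝ :=
  if k ≤ spLength l then ∑ t ∈ Finset.range (l k), z t
  else -∑ t ∈ Finset.range (k - colB l k), z t

/-!
For a strict partition `λ`, the number `k - λ'_k` vanishes for `k ≤ ℓ(λ)`, while on `k > ℓ(λ)`
the map `k ↦ k - λ'_k` is injective with image exactly the positive integers that are not parts
of `λ` (the preimage of `c` is `c + #{i : λ_i > c}`). Applied to `μ`, this turns the condition
`λ'_k - k ≠ μ'_i - i` for `k > ℓ(λ)` into "`k - λ'_k` is a part of `μ`". So the indices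
`k ≤ ℓ(λ)` in `W^B(μ,λ)` contribute the parts of `λ` that are not parts of `μ`, and the indices
`k > ℓ(λ)` contribute, with `x_k^B = -(k - λ'_k)`, minus the parts of `μ` that are not parts of
`λ`. The common parts cancel in `|λ| - |μ|`.
-/

open Finset

lemma filter_Icc_eq_Icc_findGreatest {P : ℕ → Prop} [DecidablePred P]
    {N : ℕ} (hP : ∀ i j, 1 ≤ i → i ≤ j → j ≤ N → P j → P i) :
    (Icc 1 N).filter P = Icc 1 (Nat.findGreatest P N) := by
  ext i
  simp only [mem_filter, mem_Icc]
  constructor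
  · rintro ⟨⟨hi, hiN⟩, hPi⟩
    exact ⟨hi, Nat.le_findGreatest hiN hPi⟩
  · rintro ⟨hi, hiP⟩
    refine ⟨⟨hi, hiP.trans (Nat.findGreatest_le N)⟩,
      hP i _ hi hiP (Nat.findGreatest_le N) ?_⟩
    exact Nat.findGreatest_of_ne_zero rfl (by omega)

lemma le_card_filter_Icc_iff {P : ℕ → Prop} [DecidablePred P]
    {N i : ℕ} (hP : ∀ i j, 1 ≤ i → i ≤ j → j ≤ N → P j → P i) (hi : 1 ≤ i) :
    i ≤ ((Icc 1 N).filter P).card ↔ i ≤ N ∧ P i := by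
  rw [filter_Icc_eq_Icc_findGreatest hP, Nat.card_Icc, Nat.add_sub_cancel]
  constructor
  · intro h
    exact ⟨h.trans (Nat.findGreatest_le N),
      hP i _ hi h (Nat.findGreatest_le N) (Nat.findGreatest_of_ne_zero rfl (by omega))⟩
  · exact fun h => Nat.le_findGreatest h.1 h.2

noncomputable def spParts (l : ℕ → ℕ) : Finset ℕ := (Icc 1 (spLength l)).image l

namespace IsStrictPartition

variable {l : ℕ → ℕ}

lemma eq_zero_of_le (hl : IsStrictPartition l) {i j : ℕ} (hi : 1 ≤ i) (hij : i ≤ j)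
    (h : l i = 0) : l j = 0 := by
  induction j, hij using Nat.le_induction with
  | base => exact h
  | succ j hij ih => exact (hl.2 j (by omega)).1 ih

lemma apply_add_le_apply_add (hl : IsStrictPartition l) {i j : ℕ} (hi : 1 ≤ i) (hij : i ≤ j)
    (hj : l j ≠ 0) : l j + j ≤ l i + i := by
  induction j, hij using Nat.le_induction with
  | base => rfl
  | succ j hij ih =>
    have hlj : l j ≠ 0 := fun h => hj ((hl.2 j (by omega)).1 h)
    have := (hl.2 j (by omega)).2 hlj
    have := ih hlj
    omega

lemma le_head (hl : IsStrictPartition l) {i : ℕ} (hi : 1 ≤ i) : l i ≤ l 1 := by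
  by_cases h : l i = 0
  · omega
  · have := hl.apply_add_le_apply_add le_rfl hi h
    omega

lemma le_length_iff (hl : IsStrictPartition l) {i : ℕ} (hi : 1 ≤ i) :
    i ≤ spLength l ↔ l i ≠ 0 := by
  rw [spLength, le_card_filter_Icc_iff (fun a b ha hab _ hb h => hb (hl.eq_zero_of_le ha hab h)) hi]
  constructor
  · exact fun h => h.2
  · intro h
    have := hl.apply_add_le_apply_add le_rfl hi h
    exact ⟨by omega, h⟩

lemma length_le_head (hl : IsStrictPartition l) : spLength l ≤ l 1 := by
  rcases Nat.eq_zero_or_pos (spLength l) with h | h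
  · omega
  · have := (hl.le_length_iff h).1 le_rfl
    have := hl.apply_add_le_apply_add le_rfl h this
    omega

lemma strictAntiOn (hl : IsStrictPartition l) : StrictAntiOn l (Set.Icc 1 (spLength l)) := by
  rintro i ⟨hi, -⟩ j ⟨hj, hjL⟩ hij
  have := hl.apply_add_le_apply_add (i := i + 1) (by omega) hij ((hl.le_length_iff hj).1 hjL)
  have := (hl.2 i hi).2 ((hl.le_length_iff hi).1 (by omega))
  omega

lemma colB_eq_card (hl : IsStrictPartition l) (k : ℕ) :
    colB l k = ((Icc 1 k).filter (fun i => k < l i + i)).card := by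
  rw [colB, ← card_image_of_injective ((Icc 1 k).filter (fun i => k < l i + i))
    (fun a b h => (Prod.mk.inj h).1 : Function.Injective (fun i => (i, k)))]
  refine congrArg card (ext fun ⟨i, j⟩ => ?_)
  simp only [cellsB, mem_filter, mem_product, mem_Icc, mem_image, Prod.mk.injEq]
  constructor
  · rintro ⟨⟨⟨⟨hi, -⟩, -⟩, hij, hjl⟩, rfl⟩
    exact ⟨i, ⟨⟨hi, hij⟩, hjl⟩, rfl, rfl⟩
  · rintro ⟨i, ⟨⟨hi, hij⟩, hjl⟩, rfl, rfl⟩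
    have := hl.apply_add_le_apply_add le_rfl hi (by omega)
    exact ⟨⟨⟨⟨hi, by omega⟩, by omega, by omega⟩, hij, hjl⟩, rfl⟩

lemma le_colB_iff (hl : IsStrictPartition l) {i k : ℕ} (hi : 1 ≤ i) :
    i ≤ colB l k ↔ i ≤ k ∧ k < l i + i := by
  rw [hl.colB_eq_card]
  refine le_card_filter_Icc_iff (fun a b ha hab _ hb => ?_) hi
  have := hl.apply_add_le_apply_add ha hab (by omega)
  omega

lemma colB_le_length (hl : IsStrictPartition l) (k : ℕ) : colB l k ≤ spLength l := by
  rcases Nat.eq_zero_or_pos (colB l k) with h | h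
  · omega
  · have := (hl.le_colB_iff h).1 le_rfl
    exact (hl.le_length_iff h).2 (by omega)

lemma colB_le_self (hl : IsStrictPartition l) (k : ℕ) : colB l k ≤ k := by
  rcases Nat.eq_zero_or_pos (colB l k) with h | h
  · omega
  · exact ((hl.le_colB_iff h).1 le_rfl).1

lemma colB_of_le_length (hl : IsStrictPartition l) {k : ℕ} (hk : k ≤ spLength l) :
    colB l k = k := by
  refine le_antisymm (hl.colB_le_self k) ?_
  rcases Nat.eq_zero_or_pos k with rfl | hk0
  · exact Nat.zero_le _
  · have := (hl.le_length_iff hk0).1 hk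
    exact (hl.le_colB_iff hk0).2 ⟨le_rfl, by omega⟩

lemma length_lt_of_sub_colB_ne_zero (hl : IsStrictPartition l) {k : ℕ}
    (hk : k - colB l k ≠ 0) : spLength l < k := by
  by_contra h
  rw [hl.colB_of_le_length (by omega)] at hk
  omega

lemma colB_le_colB (hl : IsStrictPartition l) {k₁ k₂ : ℕ} (h₁ : spLength l ≤ k₁)
    (h₁₂ : k₁ ≤ k₂) : colB l k₂ ≤ colB l k₁ := by
  rcases Nat.eq_zero_or_pos (colB l k₂) with h | h
  · omega
  · have := (hl.le_colB_iff h).1 le_rfl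
    have := (hl.le_length_iff h).2 (by omega)
    exact (hl.le_colB_iff h).2 ⟨by omega, by omega⟩

lemma injOn_sub_colB (hl : IsStrictPartition l) :
    Set.InjOn (fun k => k - colB l k) {k | spLength l < k} := by
  intro k₁ (h₁ : spLength l < k₁) k₂ (h₂ : spLength l < k₂) (h : k₁ - colB l k₁ = k₂ - colB l k₂)
  have := hl.colB_le_length k₁
  have := hl.colB_le_length k₂
  rcases le_total k₁ k₂ with h₁₂ | h₂₁
  · have := hl.colB_le_colB h₁.le h₁₂
    omega
  · have := hl.colB_le_colB h₂.le h₂₁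
    omega

lemma mem_spParts_iff (hl : IsStrictPartition l) {c : ℕ} :
    c ∈ spParts l ↔ c ≠ 0 ∧ ∃ i, l i = c := by
  simp only [spParts, mem_image, mem_Icc]
  constructor
  · rintro ⟨i, ⟨hi, hiL⟩, rfl⟩
    exact ⟨(hl.le_length_iff hi).1 hiL, i, rfl⟩
  · rintro ⟨hc, i, rfl⟩
    have hi : 1 ≤ i := Nat.one_le_iff_ne_zero.2 fun h => hc (h ▸ hl.1)
    exact ⟨i, ⟨hi, (hl.le_length_iff hi).2 hc⟩, rfl⟩

lemma le_head_of_mem_spParts (hl : IsStrictPartition l) {c : ℕ} (hc : c ∈ spParts l) :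
    c ≤ l 1 := by
  obtain ⟨i, hi, rfl⟩ := mem_image.1 hc
  exact hl.le_head (mem_Icc.1 hi).1

lemma sum_spParts (hl : IsStrictPartition l) : ∑ c ∈ spParts l, c = spSize l := by
  rw [spParts, sum_image fun i hi j hj h => hl.strictAntiOn.injOn (by simpa using hi)
    (by simpa using hj) h]
  refine sum_subset (Icc_subset_Icc_right hl.length_le_head) fun i hi hiL => ?_
  simp only [mem_Icc, not_and, not_le] at hi hiL
  by_contra h
  exact (hiL hi.1).not_ge ((hl.le_length_iff hi.1).2 h)

lemma exists_sub_colB_eq_iff (hl : IsStrictPartition l) {c : ℕ} (hc : c ≠ 0) :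
    (∃ k, k - colB l k = c) ↔ c ∉ spParts l := by
  rw [hl.mem_spParts_iff, not_and, not_exists]
  constructor
  · rintro ⟨k, hk⟩ - j rfl
    have hj : 1 ≤ j := Nat.one_le_iff_ne_zero.2 fun h => hc (h ▸ hl.1)
    have hjL := (hl.le_length_iff hj).2 hc
    have hkL := hl.length_lt_of_sub_colB_ne_zero (hk ▸ hc)
    have := hl.colB_le_length k
    by_cases hjk : j ≤ colB l k
    · have := (hl.le_colB_iff hj).1 hjk
      omega
    · have : l j + j ≤ k := by
        by_contra h
        exact hjk ((hl.le_colB_iff hj).2 ⟨by omega, by omega⟩)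
      omega
  · intro hnot
    -- `r` is the number of parts of `λ` exceeding `c`
    set r := Nat.findGreatest (fun i => c < l i) (spLength l)
    have hr : r ≤ colB l (c + r) := by
      rcases Nat.eq_zero_or_pos r with h | h
      · omega
      · have : c < l r := Nat.findGreatest_of_ne_zero (P := fun i => c < l i) rfl h.ne'
        exact (hl.le_colB_iff h).2 ⟨by omega, by omega⟩
    have hr' : colB l (c + r) ≤ r := by
      by_contra h
      have := (hl.le_colB_iff (k := c + r) (i := r + 1) (by omega)).1 (by omega)
      have hrL := (hl.le_length_iff (i := r + 1) (by omega)).2 (by omega)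
      have := Nat.findGreatest_is_greatest (P := fun i => c < l i) (by omega : r < r + 1) hrL
      exact hnot hc (r + 1) (by omega)
    exact ⟨c + r, by omega⟩

lemma forall_ne_iff_notMem_spParts (hl : IsStrictPartition l) {c : ℕ} (hc : c ≠ 0) :
    (∀ i, 1 ≤ i → c ≠ l i) ↔ c ∉ spParts l := by
  rw [hl.mem_spParts_iff, not_and, not_exists]
  refine ⟨fun h _ i hi => h i ?_ hi.symm, fun h i _ hi => h hc i hi.symm⟩
  exact Nat.one_le_iff_ne_zero.2 fun h0 => hc (by rw [← hi, h0, hl.1])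

lemma forall_neg_ne_colB_sub_iff (hl : IsStrictPartition l) {c : ℕ} (hc : c ≠ 0) :
    (∀ i, 1 ≤ i → -(c : ℤ) ≠ (colB l i : ℤ) - i) ↔ c ∈ spParts l := by
  rw [← not_not (a := c ∈ spParts l), ← hl.exists_sub_colB_eq_iff hc, not_exists]
  refine forall_congr' fun i => ?_
  have := hl.colB_le_self i
  constructor
  · intro h hi
    exact h (by omega) (by omega)
  · intro h _
    omega

lemma mem_WB_iff {m : ℕ → ℕ} (hl : IsStrictPartition l) (hm : IsStrictPartition m) {k : ℕ} :
    k ∈ WB m l ↔ (1 ≤ k ∧ k ≤ spLength l ∧ l k ∉ spParts m) ∨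
      (spLength l < k ∧ k - colB l k ∈ spParts m) := by
  have hL := hl.length_le_head
  have hcolL := hl.colB_le_length k
  have hrow : 1 ≤ k → k ≤ spLength l → ((∀ i, 1 ≤ i → l k ≠ m i) ↔ l k ∉ spParts m) :=
    fun hk hkL => hm.forall_ne_iff_notMem_spParts ((hl.le_length_iff hk).1 hkL)
  have hcol : spLength l < k → ((∀ i, 1 ≤ i → (colB l k : ℤ) - k ≠ (colB m i : ℤ) - i) ↔
      k - colB l k ∈ spParts m) := by
    intro hk
    rw [← hm.forall_neg_ne_colB_sub_iff (by omega), Nat.cast_sub (by omega), neg_sub]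
  simp only [WB, mem_filter, mem_Icc]
  constructor
  · rintro ⟨⟨hk, -⟩, ⟨hkL, h⟩ | ⟨hkL, h⟩⟩
    · exact Or.inl ⟨hk, hkL, (hrow hk hkL).1 h⟩
    · exact Or.inr ⟨hkL, (hcol hkL).1 h⟩
  · rintro (⟨hk, hkL, h⟩ | ⟨hkL, h⟩)
    · exact ⟨⟨hk, by omega⟩, Or.inl ⟨hkL, (hrow hk hkL).2 h⟩⟩
    · have := hm.le_head_of_mem_spParts h
      exact ⟨⟨by omega, by omega⟩, Or.inr ⟨hkL, (hcol hkL).2 h⟩⟩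

lemma sum_xB_filter_le_length {m : ℕ → ℕ} (hl : IsStrictPartition l)
    (hm : IsStrictPartition m) :
    ∑ k ∈ (WB m l).filter (· ≤ spLength l), xB l k = ∑ c ∈ spParts l \ spParts m, (c : ℤ) := by
  have hrow : ∀ k ∈ (WB m l).filter (· ≤ spLength l),
      k ∈ Icc 1 (spLength l) ∧ l k ∉ spParts m := by
    intro k hk
    rw [mem_filter, hl.mem_WB_iff hm] at hk
    obtain ⟨⟨hk, hkL, h⟩ | ⟨hkL, -⟩, hk'⟩ := hk
    · exact ⟨mem_Icc.2 ⟨hk, hkL⟩, h⟩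
    · omega
  refine sum_nbij l (fun k hk => mem_sdiff.2 ⟨mem_image_of_mem l (hrow k hk).1, (hrow k hk).2⟩)
    (hl.strictAntiOn.injOn.mono fun k hk => by simpa using (hrow k hk).1) ?_
    (fun k hk => if_pos (mem_Icc.1 (hrow k hk).1).2)
  intro c hc
  obtain ⟨hcl, hcm⟩ := mem_sdiff.1 hc
  obtain ⟨k, hk, rfl⟩ := mem_image.1 hcl
  obtain ⟨hk1, hkL⟩ := mem_Icc.1 hk
  exact ⟨k, mem_filter.2 ⟨(hl.mem_WB_iff hm).2 (Or.inl ⟨hk1, hkL, hcm⟩), hkL⟩, rfl⟩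

lemma sum_xB_filter_not_le_length {m : ℕ → ℕ} (hl : IsStrictPartition l)
    (hm : IsStrictPartition m) :
    ∑ k ∈ (WB m l).filter (¬ · ≤ spLength l), xB l k =
      ∑ c ∈ spParts m \ spParts l, -(c : ℤ) := by
  have hcol : ∀ k ∈ (WB m l).filter (¬ · ≤ spLength l),
      spLength l < k ∧ k - colB l k ∈ spParts m := by
    intro k hk
    rw [mem_filter, hl.mem_WB_iff hm] at hk
    obtain ⟨⟨-, hkL, -⟩ | h, hk'⟩ := hk
    · omega
    · exact h
  refine sum_nbij (fun k => k - colB l k) (fun k hk => mem_sdiff.2 ⟨(hcol k hk).2, ?_⟩)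
    (hl.injOn_sub_colB.mono fun k hk => (hcol k hk).1) ?_ (fun k hk => ?_)
  · exact (hl.exists_sub_colB_eq_iff (hm.mem_spParts_iff.1 (hcol k hk).2).1).1 ⟨k, rfl⟩
  · intro c hc
    obtain ⟨hcm, hcl⟩ := mem_sdiff.1 hc
    have hc0 := (hm.mem_spParts_iff.1 hcm).1
    obtain ⟨k, rfl⟩ := (hl.exists_sub_colB_eq_iff hc0).2 hcl
    have hkL := hl.length_lt_of_sub_colB_ne_zero hc0
    exact ⟨k, mem_filter.2 ⟨(hl.mem_WB_iff hm).2 (Or.inr ⟨hkL, hcm⟩), hkL.not_ge⟩, rfl⟩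
  · have := hl.colB_le_self k
    rw [xB, if_neg (hcol k hk).1.not_ge, Nat.cast_sub this]
    ring

end IsStrictPartition

/-- Lemma 3 (type B): `|λ| - |μ| = ∑_{k ∈ W^B(μ,λ)} x_k^B`. -/
theorem statement2 (l m : ℕ → ℕ) (hl : IsStrictPartition l) (hm : IsStrictPartition m) :
    (spSize l : ℤ) - (spSize m : ℤ) = ∑ k ∈ WB m l, xB l k := by
  rw [← sum_filter_add_sum_filter_not _ (· ≤ spLength l), hl.sum_xB_filter_le_length hm,
    hl.sum_xB_filter_not_le_length hm, sum_neg_distrib, ← sub_eq_add_neg, sum_sdiff_sub_sum_sdiff,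
    ← hl.sum_spParts, ← hm.sum_spParts, Nat.cast_sum, Nat.cast_sum]
end

section
/- (Weighted version of the content-sum lemma.) Let λ and μ be arbitrary strict partitions. For every assignment of real numbers z_0, z_1, z_2, …, one has Σ_{u ∈ [λ]^B} z_{c(u)} − Σ_{u ∈ [μ]^B} z_{c(u)} = Σ_{k ∈ W^B(μ,λ)} x_k^B(z), where for the strict partition λ one defines x_k^B(z) = z_0 + z_1 + ⋯ + z_{λ_k − 1} for 1 ≤ k ≤ ℓ(λ) and x_k^B(z) = −(z_0 + z_1 + ⋯ + z_{k − λ'_k − 1}) for k > ℓ(λ). -/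
attribute [local instance] Classical.propDecidable

section Aux

open Finset

/-- A downward-closed subset of `Icc 1 n` is an initial segment. -/
private lemma downward_filter {n : ℕ} {P : ℕ → Prop} [DecidablePred P]
    (h : ∀ i j, 1 ≤ i → i ≤ j → j ≤ n → P j → P i) :
    (Finset.Icc 1 n).filter P = Finset.Icc 1 (((Finset.Icc 1 n).filter P).card) := by
  set s := (Finset.Icc 1 n).filter P with hs
  ext a
  simp only [Finset.mem_Icc]
  constructor
  · intro ha
    have ha' := ha
    rw [hs, Finset.mem_filter, Finset.mem_Icc] at ha'
    have h1 : Finset.Icc 1 a ⊆ s := by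
      intro b hb
      simp only [Finset.mem_Icc] at hb
      rw [hs, Finset.mem_filter, Finset.mem_Icc]
      exact ⟨⟨hb.1, le_trans hb.2 ha'.1.2⟩, h b a hb.1 hb.2 ha'.1.2 ha'.2⟩
    have h2 := Finset.card_le_card h1
    rw [Nat.card_Icc] at h2
    exact ⟨ha'.1.1, by omega⟩
  · rintro ⟨h1, h2⟩
    by_contra hns
    have h3 : s ⊆ Finset.Icc 1 (a - 1) := by
      intro b hb
      have hb' := hb
      rw [hs, Finset.mem_filter, Finset.mem_Icc] at hb'
      rw [Finset.mem_Icc]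
      refine ⟨hb'.1.1, ?_⟩
      by_contra hba
      have : a ∈ s := by
        rw [hs, Finset.mem_filter, Finset.mem_Icc]
        exact ⟨⟨h1, by omega⟩, h a b h1 (by omega) hb'.1.2 hb'.2⟩
      exact hns this
    have h4 := Finset.card_le_card h3
    rw [Nat.card_Icc] at h4
    omega

variable {l : ℕ → ℕ}

private lemma sp_zero (hl : IsStrictPartition l) :
    ∀ i, 1 ≤ i → l i = 0 → ∀ j, i ≤ j → l j = 0 := by
  intro i hi h0 j hij
  induction j, hij using Nat.le_induction with
  | base => exact h0
  | succ j hj ih => exact (hl.2 j (le_trans hi hj)).1 ih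

private lemma sp_gap (hl : IsStrictPartition l) :
    ∀ i, 1 ≤ i → ∀ j, i ≤ j → l j ≠ 0 → l j + (j - i) ≤ l i := by
  intro i hi j hij
  induction j, hij using Nat.le_induction with
  | base => intro _; simp
  | succ j hj ih =>
    intro hne
    have hji : l j ≠ 0 := fun h => hne (sp_zero hl j (le_trans hi hj) h (j + 1) (Nat.le_succ j))
    have h1 : l (j + 1) < l j := (hl.2 j (le_trans hi hj)).2 hji
    have h2 := ih hji
    omega

private lemma sp_anti (hl : IsStrictPartition l) {i j : ℕ} (hi : 1 ≤ i) (hij : i ≤ j) :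
    l j ≤ l i := by
  by_cases h0 : l j = 0
  · omega
  · have := sp_gap hl i hi j hij h0; omega

private lemma sp_inj (hl : IsStrictPartition l) {a b : ℕ} (ha : 1 ≤ a) (hb : 1 ≤ b)
    (hab : l a = l b) (hne : l a ≠ 0) : a = b := by
  rcases lt_trichotomy a b with h | h | h
  · have := sp_gap hl a ha b (le_of_lt h) (by omega); omega
  · exact h
  · have := sp_gap hl b hb a (le_of_lt h) hne; omega

private lemma sp_le_l1 (hl : IsStrictPartition l) {j : ℕ} (hj : 1 ≤ j) (hne : l j ≠ 0) :
    l j + j ≤ l 1 + 1 := by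
  have := sp_gap hl 1 le_rfl j hj hne; omega

private lemma spLength_spec (hl : IsStrictPartition l) :
    (Finset.Icc 1 (l 1)).filter (fun i => l i ≠ 0) = Finset.Icc 1 (spLength l) := by
  rw [spLength]
  exact downward_filter (fun i j hi hij hjn hj h0 => hj (sp_zero hl i hi h0 j hij))

private lemma spLen_iff (hl : IsStrictPartition l) {i : ℕ} (hi : 1 ≤ i) :
    l i ≠ 0 ↔ i ≤ spLength l := by
  have hs := spLength_spec hl
  constructor
  · intro h
    have hle := sp_le_l1 hl hi h
    have : i ∈ (Finset.Icc 1 (l 1)).filter (fun i => l i ≠ 0) := by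
      rw [Finset.mem_filter, Finset.mem_Icc]; exact ⟨⟨hi, by omega⟩, h⟩
    rw [hs, Finset.mem_Icc] at this
    exact this.2
  · intro h
    have : i ∈ (Finset.Icc 1 (l 1)).filter (fun i => l i ≠ 0) := by
      rw [hs, Finset.mem_Icc]; exact ⟨hi, h⟩
    rw [Finset.mem_filter] at this
    exact this.2

private lemma spLength_le_l1 (hl : IsStrictPartition l) : spLength l ≤ l 1 := by
  have h := Finset.card_filter_le (Finset.Icc 1 (l 1)) (fun i => l i ≠ 0)
  rw [Nat.card_Icc] at h
  rw [spLength]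
  omega

private lemma mem_cellsB (hl : IsStrictPartition l) {p : ℕ × ℕ} :
    p ∈ cellsB l ↔ 1 ≤ p.1 ∧ p.1 ≤ p.2 ∧ p.2 < l p.1 + p.1 := by
  obtain ⟨i, j⟩ := p
  simp only [cellsB, Finset.mem_filter, Finset.mem_product, Finset.mem_Icc]
  constructor
  · rintro ⟨⟨⟨hi1, _⟩, _, _⟩, hij, hjl⟩
    exact ⟨hi1, hij, hjl⟩
  · rintro ⟨h1, h2, h3⟩
    have hli : l i ≠ 0 := by omega
    have hg := sp_le_l1 hl h1 hli
    exact ⟨⟨⟨h1, by omega⟩, by omega, by omega⟩, h2, h3⟩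

private lemma sum_cellsB (hl : IsStrictPartition l) (z : ℕ → ℝ) :
    ∑ p ∈ cellsB l, z (p.2 - p.1) =
      ∑ i ∈ Finset.Icc 1 (spLength l), ∑ t ∈ Finset.range (l i), z t := by
  have hrep : cellsB l = (Finset.Icc 1 (spLength l)).biUnion
      (fun i => (Finset.range (l i)).image (fun t => (i, i + t))) := by
    ext ⟨a, b⟩
    simp only [Finset.mem_biUnion, Finset.mem_image, Finset.mem_range, Finset.mem_Icc,
      mem_cellsB hl, Prod.mk.injEq]
    constructor
    · rintro ⟨h1, h2, h3⟩
      have hne : l a ≠ 0 := by omega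
      refine ⟨a, ⟨h1, (spLen_iff hl h1).mp hne⟩, b - a, by omega, rfl, by omega⟩
    · rintro ⟨i, ⟨hi1, hi2⟩, t, ht, rfl, rfl⟩
      exact ⟨hi1, by omega, by omega⟩
  rw [hrep, Finset.sum_biUnion]
  · apply Finset.sum_congr rfl
    intro i _
    rw [Finset.sum_image (by intro x _ y _ h; simpa using h)]
    apply Finset.sum_congr rfl
    intro t _
    congr 1
    omega
  · intro i _ j _ hij
    simp only [Finset.disjoint_left, Finset.mem_image, Finset.mem_range]
    rintro ⟨a, b⟩ ⟨t, _, h1⟩ ⟨s, _, h2⟩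
    apply hij
    rw [Prod.mk.injEq] at h1 h2
    omega

private lemma colB_small (hl : IsStrictPartition l) {k : ℕ} (h1 : 1 ≤ k)
    (h2 : k ≤ spLength l) : colB l k = k := by
  have hLne : l (spLength l) ≠ 0 := (spLen_iff hl (by omega)).mpr le_rfl
  have hrep : (cellsB l).filter (fun p => p.2 = k) =
      (Finset.Icc 1 k).image (fun a => (a, k)) := by
    ext ⟨a, b⟩
    simp only [Finset.mem_filter, Finset.mem_image, Finset.mem_Icc, mem_cellsB hl,
      Prod.mk.injEq]
    constructor
    · rintro ⟨⟨ha, hab, hal⟩, rfl⟩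
      exact ⟨a, ⟨ha, hab⟩, rfl, rfl⟩
    · rintro ⟨x, ⟨hx1, hx2⟩, rfl, rfl⟩
      have hg := sp_gap hl _ hx1 (spLength l) (by omega) hLne
      exact ⟨⟨hx1, hx2, by omega⟩, rfl⟩
  rw [colB, hrep, Finset.card_image_of_injective _ (by intro x y h; simpa using h),
    Nat.card_Icc]
  omega

private lemma colB_large (hl : IsStrictPartition l) {k : ℕ} (hk : spLength l + 1 ≤ k) :
    (Finset.Icc 1 (spLength l)).filter (fun i => k < l i + i) = Finset.Icc 1 (colB l k) := by
  have hcard : colB l k =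
      ((Finset.Icc 1 (spLength l)).filter (fun i => k < l i + i)).card := by
    have hrep : (cellsB l).filter (fun p => p.2 = k) =
        ((Finset.Icc 1 (spLength l)).filter (fun i => k < l i + i)).image
          (fun a => (a, k)) := by
      ext ⟨a, b⟩
      simp only [Finset.mem_filter, Finset.mem_image, Finset.mem_Icc, mem_cellsB hl,
        Prod.mk.injEq]
      constructor
      · rintro ⟨⟨ha, hab, hal⟩, rfl⟩
        have hne : l a ≠ 0 := by omega
        exact ⟨a, ⟨⟨ha, (spLen_iff hl ha).mp hne⟩, hal⟩, rfl, rfl⟩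
      · rintro ⟨x, ⟨⟨hx1, hx2⟩, hx3⟩, rfl, rfl⟩
        exact ⟨⟨hx1, by omega, hx3⟩, rfl⟩
    rw [colB, hrep, Finset.card_image_of_injective _ (by intro x y h; simpa using h)]
  rw [hcard]
  apply downward_filter
  intro i j hi hij hjL hj
  have hjne : l j ≠ 0 := (spLen_iff hl (by omega)).mpr hjL
  have := sp_gap hl i hi j hij hjne
  omega

private lemma colB_le (hl : IsStrictPartition l) {k : ℕ} (hk : spLength l + 1 ≤ k) :
    colB l k ≤ spLength l := by
  have h := colB_large hl hk
  have : colB l k ∈ Finset.Icc 1 (colB l k) ∨ colB l k = 0 := by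
    rcases Nat.eq_zero_or_pos (colB l k) with h0 | h0
    · exact Or.inr h0
    · exact Or.inl (Finset.mem_Icc.mpr ⟨h0, le_rfl⟩)
  rcases this with h1 | h1
  · rw [← h, Finset.mem_filter, Finset.mem_Icc] at h1
    exact h1.1.2
  · omega

private lemma colB_iff (hl : IsStrictPartition l) {k i : ℕ} (hk : spLength l + 1 ≤ k)
    (hi : 1 ≤ i) (hiL : i ≤ spLength l) : k < l i + i ↔ i ≤ colB l k := by
  have h := colB_large hl hk
  constructor
  · intro hlt
    have : i ∈ Finset.Icc 1 (colB l k) := by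
      rw [← h, Finset.mem_filter, Finset.mem_Icc]; exact ⟨⟨hi, hiL⟩, hlt⟩
    exact (Finset.mem_Icc.mp this).2
  · intro hle
    have : i ∈ (Finset.Icc 1 (spLength l)).filter (fun i => k < l i + i) := by
      rw [h, Finset.mem_Icc]; exact ⟨hi, hle⟩
    exact (Finset.mem_filter.mp this).2

private lemma not_part (hl : IsStrictPartition l) {k : ℕ} (hk : spLength l + 1 ≤ k) :
    ∀ j, 1 ≤ j → l j ≠ k - colB l k := by
  intro j hj hEq
  set c := colB l k with hc
  have hcL : c ≤ spLength l := colB_le hl hk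
  have hvpos : 1 ≤ k - c := by omega
  have hjne : l j ≠ 0 := by omega
  have hjL : j ≤ spLength l := (spLen_iff hl hj).mp hjne
  by_cases hjc : j ≤ c
  · have hc1 : 1 ≤ c := le_trans hj hjc
    have h1 : k < l c + c := (colB_iff hl hk hc1 hcL).mpr le_rfl
    have h2 : l c ≤ l j := sp_anti hl hj hjc
    omega
  · have h1 : ¬ (k < l j + j) := by
      intro h
      exact hjc ((colB_iff hl hk hj hjL).mp h)
    omega

private lemma colB_anti (hl : IsStrictPartition l) {k k' : ℕ} (hk : spLength l + 1 ≤ k)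
    (hkk : k ≤ k') : colB l k' ≤ colB l k := by
  rcases Nat.eq_zero_or_pos (colB l k') with h0 | h0
  · omega
  · have hk' : spLength l + 1 ≤ k' := le_trans hk hkk
    have hcL : colB l k' ≤ spLength l := colB_le hl hk'
    have h1 : k' < l (colB l k') + colB l k' := (colB_iff hl hk' h0 hcL).mpr le_rfl
    exact (colB_iff hl hk h0 hcL).mp (by omega)

private lemma fN_strictMono (hl : IsStrictPartition l) {k k' : ℕ}
    (hk : spLength l + 1 ≤ k) (hkk : k < k') : k - colB l k < k' - colB l k' := by
  have h1 := colB_anti hl hk (le_of_lt hkk)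
  have h2 := colB_le hl hk
  omega

private lemma exists_col (hl : IsStrictPartition l) {v : ℕ} (hv : 1 ≤ v)
    (hnp : ∀ j, 1 ≤ j → l j ≠ v) :
    ∃ d, d ≤ spLength l ∧ spLength l + 1 ≤ v + d ∧ colB l (v + d) = d := by
  set L := spLength l with hL
  set d := ((Finset.Icc 1 L).filter (fun i => v < l i)).card with hd
  have hdown : (Finset.Icc 1 L).filter (fun i => v < l i) = Finset.Icc 1 d := by
    rw [hd]
    apply downward_filter
    intro i j hi hij hjL hj
    exact lt_of_lt_of_le hj (sp_anti hl hi hij)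
  have hiff : ∀ i, 1 ≤ i → i ≤ L → (v < l i ↔ i ≤ d) := by
    intro i hi hiL
    constructor
    · intro h
      have : i ∈ Finset.Icc 1 d := by
        rw [← hdown, Finset.mem_filter, Finset.mem_Icc]; exact ⟨⟨hi, hiL⟩, h⟩
      exact (Finset.mem_Icc.mp this).2
    · intro h
      have : i ∈ (Finset.Icc 1 L).filter (fun i => v < l i) := by
        rw [hdown, Finset.mem_Icc]; exact ⟨hi, h⟩
      exact (Finset.mem_filter.mp this).2
  have hdL : d ≤ L := by
    have h := Finset.card_filter_le (Finset.Icc 1 L) (fun i => v < l i)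
    rw [Nat.card_Icc] at h
    omega
  have hkL : L + 1 ≤ v + d := by
    by_cases hdeq : d = L
    · omega
    · have hd1 : d + 1 ≤ L := by omega
      have h1 : ¬ (v < l (d + 1)) := by
        intro h
        have := (hiff (d + 1) (by omega) hd1).mp h
        omega
      have h2 : l (d + 1) ≠ v := hnp (d + 1) (by omega)
      have h3 : l (d + 1) ≠ 0 := (spLen_iff hl (by omega)).mpr hd1
      have hLne : l L ≠ 0 := (spLen_iff hl (by omega)).mpr le_rfl
      have h4 := sp_gap hl (d + 1) (by omega) L hd1 hLne
      omega
  refine ⟨d, hdL, hkL, ?_⟩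
  have hfilter : (Finset.Icc 1 L).filter (fun i => v + d < l i + i) = Finset.Icc 1 d := by
    ext i
    simp only [Finset.mem_filter, Finset.mem_Icc]
    constructor
    · rintro ⟨⟨hi1, hi2⟩, h3⟩
      refine ⟨hi1, ?_⟩
      by_contra hid
      have hid' : d + 1 ≤ i := by omega
      have h1 : ¬ (v < l i) := fun h => (by omega : ¬ i ≤ d) ((hiff i hi1 hi2).mp h)
      have h2 : l i ≠ v := hnp i hi1
      have h5 : l i ≠ 0 := (spLen_iff hl hi1).mpr hi2
      have h4 := sp_gap hl (d + 1) (by omega) i hid' h5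
      have h6 : ¬ (v < l (d + 1)) := by
        intro h
        have := (hiff (d + 1) (by omega) (by omega)).mp h
        omega
      have h7 : l (d + 1) ≠ v := hnp (d + 1) (by omega)
      omega
    · rintro ⟨hi1, hid⟩
      have hd1 : 1 ≤ d := le_trans hi1 hid
      have hiL : i ≤ L := by omega
      refine ⟨⟨hi1, hiL⟩, ?_⟩
      have h1 : v < l d := (hiff d hd1 (by omega)).mpr le_rfl
      have h2 := sp_gap hl i hi1 d hid (by omega)
      omega
  have := colB_large hl (k := v + d) hkL
  rw [hfilter] at this
  have hcard : d = colB l (v + d) := by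
    have h1 := congrArg Finset.card this
    rw [Nat.card_Icc, Nat.card_Icc] at h1
    omega
  omega

end Aux

/-- Weighted version of the content-sum lemma. -/
theorem statement12 (l m : ℕ → ℕ) (hl : IsStrictPartition l) (hm : IsStrictPartition m)
    (z : ℕ → ℝ) :
    (∑ p ∈ cellsB l, z (p.2 - p.1)) - (∑ p ∈ cellsB m, z (p.2 - p.1)) =
      ∑ k ∈ WB m l, xBz l z k := by
  classical
  set S : ℕ → ℝ := fun a => ∑ t ∈ Finset.range a, z t with hS
  have hLHS : (∑ p ∈ cellsB l, z (p.2 - p.1)) - (∑ p ∈ cellsB m, z (p.2 - p.1)) =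
      (∑ i ∈ Finset.Icc 1 (spLength l), S (l i)) -
        (∑ j ∈ Finset.Icc 1 (spLength m), S (m j)) := by
    rw [sum_cellsB hl z, sum_cellsB hm z]
  set L := spLength l with hL
  set M := spLength m with hM
  set W1 := (Finset.Icc 1 L).filter (fun k => ∀ i, 1 ≤ i → l k ≠ m i) with hW1
  set W2 := (Finset.Icc (L + 1) (l 1 + m 1 + 2)).filter
      (fun k => ∀ i, 1 ≤ i → (colB l k : ℤ) - k ≠ (colB m i : ℤ) - i) with hW2
  set C1 := (Finset.Icc 1 L).filter (fun k => ¬ ∀ i, 1 ≤ i → l k ≠ m i) with hC1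
  set J1 := (Finset.Icc 1 M).filter (fun j => ∀ i, 1 ≤ i → m j ≠ l i) with hJ1
  set C2 := (Finset.Icc 1 M).filter (fun j => ¬ ∀ i, 1 ≤ i → m j ≠ l i) with hC2
  have hLl1 := spLength_le_l1 hl
  have hMm1 := spLength_le_l1 hm
  have hsplit : WB m l = W1 ∪ W2 := by
    ext k
    simp only [WB, hW1, hW2, Finset.mem_union, Finset.mem_filter, Finset.mem_Icc, ← hL, ← hM]
    constructor
    · rintro ⟨⟨hk1, hk2⟩, h | h⟩
      · exact Or.inl ⟨⟨hk1, h.1⟩, h.2⟩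
      · exact Or.inr ⟨⟨h.1, hk2⟩, h.2⟩
    · rintro (⟨⟨hk1, hk2⟩, h⟩ | ⟨⟨hk1, hk2⟩, h⟩)
      · exact ⟨⟨hk1, by omega⟩, Or.inl ⟨hk2, h⟩⟩
      · exact ⟨⟨by omega, hk2⟩, Or.inr ⟨hk1, h⟩⟩
  have hdisj : Disjoint W1 W2 := by
    rw [Finset.disjoint_left]
    intro k h1 h2
    rw [hW1, Finset.mem_filter, Finset.mem_Icc] at h1
    rw [hW2, Finset.mem_filter, Finset.mem_Icc] at h2
    omega
  have hW1sum : ∑ k ∈ W1, xBz l z k = ∑ k ∈ W1, S (l k) := by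
    apply Finset.sum_congr rfl
    intro k hk
    rw [hW1, Finset.mem_filter, Finset.mem_Icc] at hk
    rw [xBz, if_pos hk.1.2]
  have hW2sum : ∑ k ∈ W2, xBz l z k = -∑ k ∈ W2, S (k - colB l k) := by
    have h : ∀ k ∈ W2, xBz l z k = -(S (k - colB l k)) := by
      intro k hk
      rw [hW2, Finset.mem_filter, Finset.mem_Icc] at hk
      rw [xBz, if_neg (by omega)]
    rw [Finset.sum_congr rfl h, Finset.sum_neg_distrib]
  have hrowsplit : ∑ i ∈ Finset.Icc 1 L, S (l i) =
      (∑ k ∈ W1, S (l k)) + ∑ k ∈ C1, S (l k) := by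
    rw [hW1, hC1]
    exact (Finset.sum_filter_add_sum_filter_not _ _ _).symm
  have hcolsplit : ∑ j ∈ Finset.Icc 1 M, S (m j) =
      (∑ j ∈ J1, S (m j)) + ∑ j ∈ C2, S (m j) := by
    rw [hJ1, hC2]
    exact (Finset.sum_filter_add_sum_filter_not _ _ _).symm
  -- common-parts bijection
  have hE1 : ∑ k ∈ C1, S (l k) = ∑ j ∈ C2, S (m j) := by
    have hinjl : ∀ x ∈ C1, ∀ y ∈ C1, l x = l y → x = y := by
      intro x hx y hy h
      rw [hC1, Finset.mem_filter, Finset.mem_Icc] at hx hy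
      have hxne : l x ≠ 0 := (spLen_iff hl hx.1.1).mpr hx.1.2
      exact sp_inj hl hx.1.1 hy.1.1 h hxne
    have hinjm : ∀ x ∈ C2, ∀ y ∈ C2, m x = m y → x = y := by
      intro x hx y hy h
      rw [hC2, Finset.mem_filter, Finset.mem_Icc] at hx hy
      have hxne : m x ≠ 0 := (spLen_iff hm hx.1.1).mpr hx.1.2
      exact sp_inj hm hx.1.1 hy.1.1 h hxne
    have himg : C1.image l = C2.image m := by
      ext v
      simp only [hC1, hC2, Finset.mem_image, Finset.mem_filter, Finset.mem_Icc]
      constructor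
      · rintro ⟨a, ⟨⟨ha1, ha2⟩, hcond⟩, rfl⟩
        push_neg at hcond
        obtain ⟨i, hi1, hi2⟩ := hcond
        have hane : l a ≠ 0 := (spLen_iff hl ha1).mpr ha2
        have hiM : i ≤ M := (spLen_iff hm hi1).mp (by omega)
        refine ⟨i, ⟨⟨hi1, hiM⟩, ?_⟩, hi2.symm⟩
        push_neg
        exact ⟨a, ha1, hi2.symm⟩
      · rintro ⟨a, ⟨⟨ha1, ha2⟩, hcond⟩, rfl⟩
        push_neg at hcond
        obtain ⟨i, hi1, hi2⟩ := hcond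
        have hane : m a ≠ 0 := (spLen_iff hm ha1).mpr ha2
        have hiL : i ≤ L := (spLen_iff hl hi1).mp (by omega)
        refine ⟨i, ⟨⟨hi1, hiL⟩, ?_⟩, hi2.symm⟩
        push_neg
        exact ⟨a, ha1, hi2.symm⟩
    calc ∑ k ∈ C1, S (l k) = ∑ v ∈ C1.image l, S v := (Finset.sum_image hinjl).symm
      _ = ∑ v ∈ C2.image m, S v := by rw [himg]
      _ = ∑ j ∈ C2, S (m j) := Finset.sum_image hinjm
  -- skipped-columns bijection
  have hE2 : ∑ k ∈ W2, S (k - colB l k) = ∑ j ∈ J1, S (m j) := by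
    have hinj2 : ∀ x ∈ W2, ∀ y ∈ W2, x - colB l x = y - colB l y → x = y := by
      intro x hx y hy h
      rw [hW2, Finset.mem_filter, Finset.mem_Icc] at hx hy
      rcases lt_trichotomy x y with hc | hc | hc
      · have := fN_strictMono hl hx.1.1 hc; omega
      · exact hc
      · have := fN_strictMono hl hy.1.1 hc; omega
    have hinjm : ∀ x ∈ J1, ∀ y ∈ J1, m x = m y → x = y := by
      intro x hx y hy h
      rw [hJ1, Finset.mem_filter, Finset.mem_Icc] at hx hy
      have hxne : m x ≠ 0 := (spLen_iff hm hx.1.1).mpr hx.1.2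
      exact sp_inj hm hx.1.1 hy.1.1 h hxne
    have himg : W2.image (fun k => k - colB l k) = J1.image m := by
      ext v
      simp only [hW2, hJ1, Finset.mem_image, Finset.mem_filter, Finset.mem_Icc]
      constructor
      · rintro ⟨k, ⟨⟨hk1, hk2⟩, hcond⟩, rfl⟩
        have hcLe : colB l k ≤ L := colB_le hl hk1
        have hv1 : 1 ≤ k - colB l k := by omega
        have hpart : ∃ j, 1 ≤ j ∧ m j = k - colB l k := by
          by_contra hno
          push_neg at hno
          obtain ⟨d, hd1, hd2, hd3⟩ := exists_col hm hv1 (fun j hj => hno j hj)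
          have := hcond ((k - colB l k) + d) (by omega)
          rw [hd3] at this
          apply this
          push_cast
          omega
        obtain ⟨j, hj1, hj2⟩ := hpart
        have hjM : j ≤ M := (spLen_iff hm hj1).mp (by omega)
        refine ⟨j, ⟨⟨hj1, hjM⟩, ?_⟩, hj2⟩
        intro i hi heq
        exact not_part hl hk1 i hi (heq ▸ hj2)
      · rintro ⟨j, ⟨⟨hj1, hjM⟩, hcond⟩, rfl⟩
        have hvne : m j ≠ 0 := (spLen_iff hm hj1).mpr hjM
        have hnl : ∀ i, 1 ≤ i → l i ≠ m j := fun i hi h => hcond i hi h.symm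
        obtain ⟨d, hd1, hd2, hd3⟩ := exists_col hl (by omega) hnl
        have hmj1 : m j ≤ m 1 := sp_anti hm le_rfl hj1
        refine ⟨m j + d, ⟨⟨hd2, by omega⟩, ?_⟩, by omega⟩
        intro i hi heq
        rw [hd3] at heq
        by_cases hiM : i ≤ M
        · rw [colB_small hm hi hiM] at heq
          omega
        · have hiM' : M + 1 ≤ i := by omega
          have hcmi : colB m i ≤ M := colB_le hm hiM'
          have hnp := not_part hm hiM' j hj1
          omega
    calc ∑ k ∈ W2, S (k - colB l k)
        = ∑ v ∈ W2.image (fun k => k - colB l k), S v := (Finset.sum_image hinj2).symm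
      _ = ∑ v ∈ J1.image m, S v := by rw [himg]
      _ = ∑ j ∈ J1, S (m j) := Finset.sum_image hinjm
  rw [hLHS, hsplit, Finset.sum_union hdisj, hW1sum, hW2sum, hE2, hrowsplit, hcolsplit, hE1]
  ring
end

section
/- (Excited diagrams of type D as flagged increasing tableaux.) Let λ and μ be strict partitions with μ ⊆ λ. The map T ↦ D_T := {(i + T(i,j), j + T(i,j)) : (i,j) ∈ [μ]^D} is a bijection from the set of functions T : [μ]^D → ℤ_{≥0} satisfying T(i,j) ≤ T(i,j+1) and T(i,j) ≤ T(i+1,j) whenever both cells involved lie in [μ]^D, T(i,i+1) even for every diagonal cell (i,i+1) ∈ [μ]^D, and j ≤ λ_{i + T(i,j)} + i for every (i,j) ∈ [μ]^D, onto the set E^D(λ/μ) of excited diagrams of type D of shape λ/μ. -/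
attribute [local instance] Classical.propDecidable

/-!
Write `D_T` for the image of `[μ]^D` under `(i,j) ↦ (i + T(i,j), j + T(i,j))`. This shift
preserves the content `j - i`, and along each content diagonal of `[μ]^D` the row `i + T(i,j)`
is strictly increasing because `T` is weakly increasing; hence the shift is injective and the
rows of `T` can be recovered one after another from `D_T`.

An excited move of type D at the image of `(i,j)` is exactly raising `T(i,j)` by `1`
(by `2` on the diagonal): the cells the move requires to be empty are what keeps `T`
weakly increasing, and the target cell lying in `[λ]^D` is the flag condition. Conversely,
lowering `T` at the lexicographically first cell where it is nonzero undoes such a move, which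
gives every `D_T` as an excited diagram by induction on `∑ T`.
-/

namespace IsStrictPartition

variable {l : ℕ → ℕ}

theorem apply_add_le_of_le (hl : IsStrictPartition l) {a b : ℕ} (ha : 1 ≤ a) (hab : a ≤ b)
    (hb : l b ≠ 0) : l b + b ≤ l a + a := by
  induction b, hab using Nat.le_induction with
  | base => exact le_rfl
  | succ b hab ih =>
    have hb' : l b ≠ 0 := fun h => hb ((hl.2 b (by omega)).1 h)
    have := (hl.2 b (by omega)).2 hb'
    have := ih hb'
    omega

end IsStrictPartition

section Cells

variable {l : ℕ → ℕ}

theorem mem_cellsD_iff (hl : IsStrictPartition l) {i j : ℕ} :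
    (i, j) ∈ cellsD l ↔ 1 ≤ i ∧ i < j ∧ j ≤ l i + i := by
  simp only [cellsD, Finset.mem_filter, Finset.mem_product, Finset.mem_Icc]
  refine ⟨by omega, fun ⟨h1, h2, h3⟩ => ?_⟩
  have := hl.apply_add_le_of_le le_rfl h1 (by omega)
  omega

theorem mem_cellsD_of_le (hl : IsStrictPartition l) {i j i' j' : ℕ} (h : (i, j) ∈ cellsD l)
    (hi' : 1 ≤ i') (hi : i' ≤ i) (hij' : i' < j') (hj : j' ≤ j) : (i', j') ∈ cellsD l := by
  obtain ⟨-, hij, hjl⟩ := (mem_cellsD_iff hl).1 h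
  have := hl.apply_add_le_of_le hi' hi (by omega)
  exact (mem_cellsD_iff hl).2 ⟨hi', hij', by omega⟩

theorem mem_ED_iff {m : ℕ → ℕ} {D : Finset (ℕ × ℕ)} :
    D ∈ ED l m ↔ D ⊆ cellsD l ∧ Relation.ReflTransGen (ExcitedMoveD l) (cellsD m) D := by
  rw [ED, Finset.mem_filter, Finset.mem_powerset]

end Cells

theorem Finset.image_update_of_injOn {α β : Type*} [DecidableEq α] [DecidableEq β]
    {s : Finset α} {f : α → β} (hf : Set.InjOn f s) {a : α} (ha : a ∈ s) (b : β) :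
    s.image (Function.update f a b) = insert b ((s.image f).erase (f a)) := by
  ext x
  simp only [Finset.mem_image, Finset.mem_insert, Finset.mem_erase]
  constructor
  · rintro ⟨c, hc, rfl⟩
    by_cases hca : c = a
    · simp [hca]
    · rw [Function.update_of_ne hca]
      exact Or.inr ⟨fun h => hca (hf hc ha h), c, hc, rfl⟩
  · rintro (rfl | ⟨hne, c, hc, rfl⟩)
    · exact ⟨a, ha, Function.update_self a _ f⟩
    · have hca : c ≠ a := fun h => hne (h ▸ rfl)
      exact ⟨c, hc, Function.update_of_ne hca b f⟩

structure IsFlaggedTableauD (l m : ℕ → ℕ) (T : ℕ × ℕ → ℕ) : Prop where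
  eq_zero_of_notMem : ∀ p, p ∉ cellsD m → T p = 0
  row_mono : ∀ i j : ℕ, (i, j) ∈ cellsD m → (i, j + 1) ∈ cellsD m → T (i, j) ≤ T (i, j + 1)
  col_mono : ∀ i j : ℕ, (i, j) ∈ cellsD m → (i + 1, j) ∈ cellsD m → T (i, j) ≤ T (i + 1, j)
  even_diag : ∀ i : ℕ, (i, i + 1) ∈ cellsD m → Even (T (i, i + 1))
  flag : ∀ i j : ℕ, (i, j) ∈ cellsD m → j ≤ l (i + T (i, j)) + i

noncomputable def excitedDiagramOf (m : ℕ → ℕ) (T : ℕ × ℕ → ℕ) : Finset (ℕ × ℕ) :=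
  (cellsD m).image (fun p => (p.1 + T p, p.2 + T p))

section Tableaux

variable {l m : ℕ → ℕ} {T : ℕ × ℕ → ℕ}

theorem isFlaggedTableauD_iff :
    IsFlaggedTableauD l m T ↔
      (∀ p, p ∉ cellsD m → T p = 0) ∧
      (∀ i j : ℕ, (i, j) ∈ cellsD m → (i, j + 1) ∈ cellsD m → T (i, j) ≤ T (i, j + 1)) ∧
      (∀ i j : ℕ, (i, j) ∈ cellsD m → (i + 1, j) ∈ cellsD m → T (i, j) ≤ T (i + 1, j)) ∧
      (∀ i : ℕ, (i, i + 1) ∈ cellsD m → Even (T (i, i + 1))) ∧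
      (∀ i j : ℕ, (i, j) ∈ cellsD m → j ≤ l (i + T (i, j)) + i) :=
  ⟨fun h => ⟨h.1, h.2, h.3, h.4, h.5⟩, fun ⟨h1, h2, h3, h4, h5⟩ => ⟨h1, h2, h3, h4, h5⟩⟩

theorem isFlaggedTableauD_zero (hl : IsStrictPartition l) (hsub : cellsD m ⊆ cellsD l) :
    IsFlaggedTableauD l m 0 where
  eq_zero_of_notMem _ _ := rfl
  row_mono _ _ _ _ := le_rfl
  col_mono _ _ _ _ := le_rfl
  even_diag _ _ := Even.zero
  flag i j hij := by
    have := (mem_cellsD_iff hl).1 (hsub hij)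
    simpa using this.2.2

theorem excitedDiagramOf_zero : excitedDiagramOf m 0 = cellsD m := by
  simp [excitedDiagramOf]

theorem mem_excitedDiagramOf_of_eq {a b r s : ℕ} (hab : (a, b) ∈ cellsD m)
    (hr : a + T (a, b) = r) (hs : b + T (a, b) = s) : (r, s) ∈ excitedDiagramOf m T :=
  Finset.mem_image.2 ⟨(a, b), hab, by rw [hr, hs]⟩

theorem exists_of_mem_excitedDiagramOf {r s : ℕ} (h : (r, s) ∈ excitedDiagramOf m T) :
    ∃ a b, (a, b) ∈ cellsD m ∧ a + T (a, b) = r ∧ b + T (a, b) = s := by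
  obtain ⟨⟨a, b⟩, hab, he⟩ := Finset.mem_image.1 h
  exact ⟨a, b, hab, congrArg Prod.fst he, congrArg Prod.snd he⟩

namespace IsFlaggedTableauD

theorem mono (hm : IsStrictPartition m) (hT : IsFlaggedTableauD l m T) {a b i j : ℕ}
    (hab : (a, b) ∈ cellsD m) (hij : (i, j) ∈ cellsD m) (ha : a ≤ i) (hb : b ≤ j) :
    T (a, b) ≤ T (i, j) := by
  obtain ⟨ha1, hab', -⟩ := (mem_cellsD_iff hm).1 hab
  have hrow : ∀ y, b ≤ y → (a, y) ∈ cellsD m → T (a, b) ≤ T (a, y) := by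
    intro y hy
    induction y, hy using Nat.le_induction with
    | base => exact fun _ => le_rfl
    | succ y hy ih =>
      intro h
      have h' : (a, y) ∈ cellsD m := mem_cellsD_of_le hm h ha1 le_rfl (by omega) (by omega)
      exact (ih h').trans (hT.row_mono a y h' h)
  have hcol : ∀ x, a ≤ x → (x, j) ∈ cellsD m → T (a, j) ≤ T (x, j) := by
    intro x hx
    induction x, hx using Nat.le_induction with
    | base => exact fun _ => le_rfl
    | succ x hx ih =>
      intro h
      have := (mem_cellsD_iff hm).1 h
      have h' : (x, j) ∈ cellsD m := mem_cellsD_of_le hm h (by omega) (by omega) (by omega) le_rfl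
      exact (ih h').trans (hT.col_mono x j h' h)
  exact (hrow j hb (mem_cellsD_of_le hm hij ha1 ha (by omega) le_rfl)).trans (hcol i ha hij)

theorem injOn_shift (hm : IsStrictPartition m) (hT : IsFlaggedTableauD l m T) :
    Set.InjOn (fun p : ℕ × ℕ => (p.1 + T p, p.2 + T p)) (cellsD m) := by
  rintro ⟨a, b⟩ hab ⟨x, y⟩ hxy he
  simp only [Prod.mk.injEq] at he
  have := (mem_cellsD_iff hm).1 hab
  have := (mem_cellsD_iff hm).1 hxy
  rcases lt_trichotomy a x with h | rfl | h
  · have := hT.mono hm hab hxy h.le (by omega)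
    omega
  · simp only [Prod.mk.injEq, true_and]
    omega
  · have := hT.mono hm hxy hab h.le (by omega)
    omega

theorem excitedDiagramOf_subset (hl : IsStrictPartition l) (hm : IsStrictPartition m)
    (hT : IsFlaggedTableauD l m T) : excitedDiagramOf m T ⊆ cellsD l := by
  rintro ⟨r, s⟩ h
  obtain ⟨a, b, hab, rfl, rfl⟩ := exists_of_mem_excitedDiagramOf h
  have := (mem_cellsD_iff hm).1 hab
  have := hT.flag a b hab
  exact (mem_cellsD_iff hl).2 ⟨by omega, by omega, by omega⟩

theorem excitedDiagramOf_update (hm : IsStrictPartition m) (hT : IsFlaggedTableauD l m T)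
    {a b : ℕ} (hab : (a, b) ∈ cellsD m) (v : ℕ) :
    excitedDiagramOf m (Function.update T (a, b) v) =
      insert (a + v, b + v) ((excitedDiagramOf m T).erase (a + T (a, b), b + T (a, b))) := by
  have hshift : (fun p : ℕ × ℕ => (p.1 + Function.update T (a, b) v p,
      p.2 + Function.update T (a, b) v p)) =
      Function.update (fun p : ℕ × ℕ => (p.1 + T p, p.2 + T p)) (a, b) (a + v, b + v) := by
    funext p
    by_cases h : p = (a, b)
    · subst h
      simp
    · simp only [Function.update_of_ne h]
  rw [excitedDiagramOf, hshift, Finset.image_update_of_injOn (hT.injOn_shift hm) hab]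
  rfl

theorem update (hT : IsFlaggedTableauD l m T) {a b v : ℕ}
    (hab : (a, b) ∈ cellsD m)
    (hleft : ∀ y, y + 1 = b → (a, y) ∈ cellsD m → T (a, y) ≤ v)
    (hright : (a, b + 1) ∈ cellsD m → v ≤ T (a, b + 1))
    (hup : ∀ x, x + 1 = a → (x, b) ∈ cellsD m → T (x, b) ≤ v)
    (hdown : (a + 1, b) ∈ cellsD m → v ≤ T (a + 1, b))
    (heven : b = a + 1 → Even v) (hflag : b ≤ l (a + v) + a) :
    IsFlaggedTableauD l m (Function.update T (a, b) v) where
  eq_zero_of_notMem p hp := by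
    rw [Function.update_of_ne (by rintro rfl; exact hp hab)]
    exact hT.eq_zero_of_notMem p hp
  row_mono x y hx hy := by
    simp only [Function.update_apply, Prod.mk.injEq]
    split_ifs with h₁ h₂ h₂
    · exact le_rfl
    · obtain ⟨rfl, rfl⟩ := h₁
      exact hright hy
    · obtain ⟨rfl, h⟩ := h₂
      exact hleft y h hx
    · exact hT.row_mono x y hx hy
  col_mono x y hx hy := by
    simp only [Function.update_apply, Prod.mk.injEq]
    split_ifs with h₁ h₂ h₂
    · exact le_rfl
    · obtain ⟨rfl, rfl⟩ := h₁
      exact hdown hy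
    · obtain ⟨h, rfl⟩ := h₂
      exact hup x h hx
    · exact hT.col_mono x y hx hy
  even_diag x hx := by
    simp only [Function.update_apply, Prod.mk.injEq]
    split_ifs with h
    · exact heven (h.1 ▸ h.2.symm)
    · exact hT.even_diag x hx
  flag x y hxy := by
    simp only [Function.update_apply, Prod.mk.injEq]
    split_ifs with h
    · obtain ⟨rfl, rfl⟩ := h
      exact hflag
    · exact hT.flag x y hxy

end IsFlaggedTableauD

end Tableaux

section Injectivity

variable {l m : ℕ → ℕ} {T₁ T₂ : ℕ × ℕ → ℕ}

theorem le_of_excitedDiagramOf_eq (hm : IsStrictPartition m) (hT₁ : IsFlaggedTableauD l m T₁)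
    (hT₂ : IsFlaggedTableauD l m T₂) (h : excitedDiagramOf m T₁ = excitedDiagramOf m T₂)
    {a b : ℕ} (hab : (a, b) ∈ cellsD m)
    (hrows : ∀ x y, (x, y) ∈ cellsD m → x < a → T₁ (x, y) = T₂ (x, y)) :
    T₂ (a, b) ≤ T₁ (a, b) := by
  have hmem : (a + T₁ (a, b), b + T₁ (a, b)) ∈ excitedDiagramOf m T₂ :=
    h ▸ mem_excitedDiagramOf_of_eq hab rfl rfl
  obtain ⟨x, y, hxy, hx, hy⟩ := exists_of_mem_excitedDiagramOf hmem
  have := (mem_cellsD_iff hm).1 hab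
  have := (mem_cellsD_iff hm).1 hxy
  rcases lt_trichotomy x a with hxa | rfl | hxa
  · have := hT₁.mono hm hxy hab hxa.le (by omega)
    have := hrows x y hxy hxa
    omega
  · obtain rfl : y = b := by omega
    omega
  · have := hT₂.mono hm hab hxy hxa.le (by omega)
    omega

theorem IsFlaggedTableauD.eq_of_excitedDiagramOf_eq (hm : IsStrictPartition m)
    (hT₁ : IsFlaggedTableauD l m T₁) (hT₂ : IsFlaggedTableauD l m T₂)
    (h : excitedDiagramOf m T₁ = excitedDiagramOf m T₂) : T₁ = T₂ := by
  suffices hrow : ∀ a b, (a, b) ∈ cellsD m → T₁ (a, b) = T₂ (a, b) by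
    funext ⟨a, b⟩
    by_cases hab : (a, b) ∈ cellsD m
    · exact hrow a b hab
    · rw [hT₁.eq_zero_of_notMem _ hab, hT₂.eq_zero_of_notMem _ hab]
  intro a
  induction a using Nat.strong_induction_on with
  | _ a ih =>
    intro b hab
    exact le_antisymm
      (le_of_excitedDiagramOf_eq hm hT₂ hT₁ h.symm hab fun x y hxy hxa => (ih x hxa y hxy).symm)
      (le_of_excitedDiagramOf_eq hm hT₁ hT₂ h hab fun x y hxy hxa => ih x hxa y hxy)

end Injectivity

section Raising

variable {l m : ℕ → ℕ} {T : ℕ × ℕ → ℕ}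

namespace IsFlaggedTableauD

theorem exists_of_excitedMove_offDiag (hl : IsStrictPartition l) (hm : IsStrictPartition m)
    (hT : IsFlaggedTableauD l m T) {r s : ℕ} (hrs : r + 1 < s)
    (hmem : (r, s) ∈ excitedDiagramOf m T) (hdown : (r + 1, s) ∉ excitedDiagramOf m T)
    (hright : (r, s + 1) ∉ excitedDiagramOf m T) (hcorner : (r + 1, s + 1) ∈ cellsD l) :
    ∃ T', IsFlaggedTableauD l m T' ∧
      excitedDiagramOf m T' = insert (r + 1, s + 1) ((excitedDiagramOf m T).erase (r, s)) := by
  obtain ⟨a, b, hab, rfl, rfl⟩ := exists_of_mem_excitedDiagramOf hmem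
  refine ⟨Function.update T (a, b) (T (a, b) + 1), hT.update hab ?_ ?_ ?_ ?_ ?_ ?_, ?_⟩
  · intro y hy hay
    have := hT.row_mono a y hay (by rwa [hy])
    rw [hy] at this
    omega
  · intro h
    have := hT.row_mono a b hab h
    by_contra hlt
    exact hright (mem_excitedDiagramOf_of_eq h (by omega) (by omega))
  · intro x hx hxb
    have := hT.col_mono x b hxb (by rwa [hx])
    rw [hx] at this
    omega
  · intro h
    have := hT.col_mono a b hab h
    by_contra hlt
    exact hdown (mem_excitedDiagramOf_of_eq h (by omega) (by omega))
  · omega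
  · have := (mem_cellsD_iff hl).1 hcorner
    rw [← add_assoc]
    omega
  · rw [hT.excitedDiagramOf_update hm hab, ← add_assoc, ← add_assoc]

theorem exists_of_excitedMove_diag (hl : IsStrictPartition l) (hm : IsStrictPartition m)
    (hT : IsFlaggedTableauD l m T) {r : ℕ}
    (hmem : (r, r + 1) ∈ excitedDiagramOf m T) (hright : (r, r + 2) ∉ excitedDiagramOf m T)
    (hdiag : (r + 1, r + 3) ∉ excitedDiagramOf m T) (hcorner : (r + 2, r + 3) ∈ cellsD l) :
    ∃ T', IsFlaggedTableauD l m T' ∧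
      excitedDiagramOf m T' = insert (r + 2, r + 3) ((excitedDiagramOf m T).erase (r, r + 1)) := by
  obtain ⟨a, b, hab, rfl, hb⟩ := exists_of_mem_excitedDiagramOf hmem
  obtain rfl : b = a + 1 := by omega
  refine ⟨Function.update T (a, a + 1) (T (a, a + 1) + 2), hT.update hab ?_ ?_ ?_ ?_ ?_ ?_, ?_⟩
  · intro y hy hay
    have := (mem_cellsD_iff hm).1 hay
    omega
  · intro h
    have := hT.row_mono a (a + 1) hab h
    by_contra hlt
    obtain he | he : T (a, a + 1 + 1) = T (a, a + 1) ∨ T (a, a + 1 + 1) = T (a, a + 1) + 1 := by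
      omega
    · exact hright (mem_excitedDiagramOf_of_eq h (by omega) (by omega))
    · exact hdiag (mem_excitedDiagramOf_of_eq h (by omega) (by omega))
  · intro x hx hxb
    have := hT.col_mono x (a + 1) hxb (by rwa [hx])
    rw [hx] at this
    omega
  · intro h
    have := (mem_cellsD_iff hm).1 h
    omega
  · exact fun _ => (hT.even_diag a hab).add even_two
  · have := (mem_cellsD_iff hl).1 hcorner
    rw [← add_assoc]
    omega
  · rw [hT.excitedDiagramOf_update hm hab]
    ring_nf

theorem exists_of_excitedMoveD (hl : IsStrictPartition l) (hm : IsStrictPartition m)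
    (hT : IsFlaggedTableauD l m T) {D : Finset (ℕ × ℕ)}
    (h : ExcitedMoveD l (excitedDiagramOf m T) D) :
    ∃ T', IsFlaggedTableauD l m T' ∧ excitedDiagramOf m T' = D := by
  rcases h with ⟨r, s, hrs, hmem, -, hdown, -, hright, hcorner, -, rfl⟩ |
    ⟨r, hmem, -, hright, -, -, -, -, -, hdiag, hcorner, -, rfl⟩
  · exact hT.exists_of_excitedMove_offDiag hl hm hrs hmem hdown hright hcorner
  · exact hT.exists_of_excitedMove_diag hl hm hmem hright hdiag hcorner

end IsFlaggedTableauD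

theorem exists_isFlaggedTableauD_of_reflTransGen (hl : IsStrictPartition l)
    (hm : IsStrictPartition m) (hsub : cellsD m ⊆ cellsD l) {D : Finset (ℕ × ℕ)}
    (h : Relation.ReflTransGen (ExcitedMoveD l) (cellsD m) D) :
    ∃ T, IsFlaggedTableauD l m T ∧ excitedDiagramOf m T = D := by
  induction h with
  | refl => exact ⟨0, isFlaggedTableauD_zero hl hsub, excitedDiagramOf_zero⟩
  | tail _ hmove ih =>
    obtain ⟨T, hT, rfl⟩ := ih
    exact hT.exists_of_excitedMoveD hl hm hmove

end Raising

section Lowering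

variable {l m : ℕ → ℕ} {T : ℕ × ℕ → ℕ}

theorem exists_lexMin_of_ne_zero {s : Finset (ℕ × ℕ)} (hT : ∀ p, p ∉ s → T p = 0)
    (h : ∃ p ∈ s, T p ≠ 0) :
    ∃ i j, (i, j) ∈ s ∧ T (i, j) ≠ 0 ∧ (∀ p : ℕ × ℕ, p.1 < i → T p = 0) ∧
      ∀ y < j, T (i, y) = 0 := by
  obtain ⟨p, hp, hne⟩ := h
  obtain ⟨⟨i, j⟩, hij, hmin⟩ :=
    (s.filter (T · ≠ 0)).exists_min_image toLex ⟨p, Finset.mem_filter.2 ⟨hp, hne⟩⟩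
  have hle : ∀ q, T q ≠ 0 → i ≤ q.1 ∧ (i = q.1 → j ≤ q.2) := fun q hq =>
    Prod.Lex.toLex_le_toLex'.1 <| hmin q <|
      Finset.mem_filter.2 ⟨by_contra fun hqs => hq (hT q hqs), hq⟩
  refine ⟨i, j, (Finset.mem_filter.1 hij).1, (Finset.mem_filter.1 hij).2, fun q hq => ?_,
    fun y hy => ?_⟩
  · by_contra h0
    have := (hle q h0).1
    omega
  · by_contra h0
    have := (hle (i, y) h0).2 rfl
    omega

namespace IsFlaggedTableauD

variable {i j : ℕ}

theorem update_of_lexMin (hl : IsStrictPartition l) (hm : IsStrictPartition m)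
    (hT : IsFlaggedTableauD l m T) (hij : (i, j) ∈ cellsD m)
    (hrows : ∀ p : ℕ × ℕ, p.1 < i → T p = 0) (hrow : ∀ y < j, T (i, y) = 0) {v : ℕ}
    (hv : v ≤ T (i, j)) (heven : j = i + 1 → Even v) :
    IsFlaggedTableauD l m (Function.update T (i, j) v) := by
  refine hT.update hij (fun y hy _ => ?_) (fun h => hv.trans (hT.row_mono i j hij h))
    (fun x hx _ => ?_) (fun h => hv.trans (hT.col_mono i j hij h)) heven ?_
  · rw [hrow y (by omega)]
    exact Nat.zero_le v
  · rw [hrows (x, j) (show x < i by omega)]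
    exact Nat.zero_le v
  · have := hT.flag i j hij
    have := (mem_cellsD_iff hm).1 hij
    have := hl.apply_add_le_of_le (a := i + v) (b := i + T (i, j)) (by omega) (by omega)
      (by omega)
    omega

/-- The window contains every cell that the excited move undoing the lowering must find empty;
by lexicographic minimality of `(i,j)`, no other cell of `[μ]^D` is shifted into it. -/
theorem notMem_excitedDiagramOf_update_of_lexMin (hm : IsStrictPartition m)
    (hT : IsFlaggedTableauD l m T) (hij : (i, j) ∈ cellsD m)
    (hrows : ∀ p : ℕ × ℕ, p.1 < i → T p = 0) (hrow : ∀ y < j, T (i, y) = 0) {v ρ σ : ℕ}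
    (hρ : i ≤ ρ) (hρ' : ρ ≤ i + T (i, j)) (hσ : j ≤ σ) (hσ' : σ ≤ j + T (i, j))
    (hcontent : j + ρ ≤ σ + i + 1) (hne : (ρ, σ) ≠ (i + v, j + v)) :
    (ρ, σ) ∉ excitedDiagramOf m (Function.update T (i, j) v) := by
  rw [hT.excitedDiagramOf_update hm hij, Finset.mem_insert, Finset.mem_erase]
  rintro (h | ⟨hold, hmem⟩)
  · exact hne h
  obtain ⟨x, y, hxy, rfl, rfl⟩ := exists_of_mem_excitedDiagramOf hmem
  have := (mem_cellsD_iff hm).1 hxy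
  rcases lt_trichotomy x i with hx | rfl | hx
  · have := hrows (x, y) hx
    omega
  · rcases lt_trichotomy y j with hy | rfl | hy
    · have := hrow y hy
      omega
    · exact hold rfl
    · have := hT.mono hm hij hxy le_rfl hy.le
      omega
  · have := hT.mono hm hij hxy hx.le (by omega)
    omega

theorem excitedMoveD_update_offDiag (hl : IsStrictPartition l) (hm : IsStrictPartition m)
    (hT : IsFlaggedTableauD l m T) (hij : (i, j) ∈ cellsD m) (hj : i + 1 < j)
    (hrows : ∀ p : ℕ × ℕ, p.1 < i → T p = 0) (hrow : ∀ y < j, T (i, y) = 0) {t : ℕ}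
    (ht : T (i, j) = t + 1) (hT' : IsFlaggedTableauD l m (Function.update T (i, j) t)) :
    ExcitedMoveD l (excitedDiagramOf m (Function.update T (i, j) t)) (excitedDiagramOf m T) := by
  have := (mem_cellsD_iff hm).1 hij
  have hcorner : (i + t + 1, j + t + 1) ∈ cellsD l :=
    hT.excitedDiagramOf_subset hl hm (mem_excitedDiagramOf_of_eq hij (by omega) (by omega))
  have hempty ρ σ := hT.notMem_excitedDiagramOf_update_of_lexMin hm hij hrows hrow
    (v := t) (ρ := ρ) (σ := σ)
  refine Or.inl ⟨i + t, j + t, by omega, mem_excitedDiagramOf_of_eq hij (by simp) (by simp),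
    mem_cellsD_of_le hl hcorner (by omega) le_rfl (by omega) (by omega),
    hempty _ _ (by omega) (by omega) (by omega) (by omega) (by omega)
      (by simp only [ne_eq, Prod.mk.injEq]; omega),
    mem_cellsD_of_le hl hcorner (by omega) (by omega) (by omega) le_rfl,
    hempty _ _ (by omega) (by omega) (by omega) (by omega) (by omega)
      (by simp only [ne_eq, Prod.mk.injEq]; omega), hcorner,
    hempty _ _ (by omega) (by omega) (by omega) (by omega) (by omega)
      (by simp only [ne_eq, Prod.mk.injEq]; omega), ?_⟩
  have hTT' : T = Function.update (Function.update T (i, j) t) (i, j) (t + 1) := by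
    rw [Function.update_idem, ← ht, Function.update_eq_self]
  conv_lhs => rw [hTT']
  rw [hT'.excitedDiagramOf_update hm hij, Function.update_self]
  ring_nf

theorem excitedMoveD_update_diag (hl : IsStrictPartition l) (hm : IsStrictPartition m)
    (hT : IsFlaggedTableauD l m T) (hij : (i, i + 1) ∈ cellsD m)
    (hrows : ∀ p : ℕ × ℕ, p.1 < i → T p = 0) {t : ℕ} (ht : T (i, i + 1) = t + 2)
    (hT' : IsFlaggedTableauD l m (Function.update T (i, i + 1) t)) :
    ExcitedMoveD l (excitedDiagramOf m (Function.update T (i, i + 1) t))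
      (excitedDiagramOf m T) := by
  have := (mem_cellsD_iff hm).1 hij
  have hrow y (hy : y < i + 1) : T (i, y) = 0 :=
    hT.eq_zero_of_notMem _ fun h => by have := (mem_cellsD_iff hm).1 h; omega
  have hcorner : (i + t + 2, i + t + 3) ∈ cellsD l :=
    hT.excitedDiagramOf_subset hl hm (mem_excitedDiagramOf_of_eq hij (by omega) (by omega))
  have hempty ρ σ := hT.notMem_excitedDiagramOf_update_of_lexMin hm hij hrows hrow
    (v := t) (ρ := ρ) (σ := σ)
  refine Or.inr ⟨i + t, mem_excitedDiagramOf_of_eq hij (by simp) (by simp; omega),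
    mem_cellsD_of_le hl hcorner (by omega) (by omega) (by omega) (by omega),
    hempty _ _ (by omega) (by omega) (by omega) (by omega) (by omega)
      (by simp only [ne_eq, Prod.mk.injEq]; omega),
    mem_cellsD_of_le hl hcorner (by omega) (by omega) (by omega) (by omega),
    hempty _ _ (by omega) (by omega) (by omega) (by omega) (by omega)
      (by simp only [ne_eq, Prod.mk.injEq]; omega),
    mem_cellsD_of_le hl hcorner (by omega) (by omega) (by omega) (by omega),
    hempty _ _ (by omega) (by omega) (by omega) (by omega) (by omega)
      (by simp only [ne_eq, Prod.mk.injEq]; omega),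
    mem_cellsD_of_le hl hcorner (by omega) (by omega) (by omega) (by omega),
    hempty _ _ (by omega) (by omega) (by omega) (by omega) (by omega)
      (by simp only [ne_eq, Prod.mk.injEq]; omega), hcorner,
    hempty _ _ (by omega) (by omega) (by omega) (by omega) (by omega)
      (by simp only [ne_eq, Prod.mk.injEq]; omega), ?_⟩
  have hTT' : T = Function.update (Function.update T (i, i + 1) t) (i, i + 1) (t + 2) := by
    rw [Function.update_idem, ← ht, Function.update_eq_self]
  conv_lhs => rw [hTT']
  rw [hT'.excitedDiagramOf_update hm hij, Function.update_self]
  ring_nf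

theorem exists_excitedMoveD_update (hl : IsStrictPartition l) (hm : IsStrictPartition m)
    (hT : IsFlaggedTableauD l m T) (h : ∃ p ∈ cellsD m, T p ≠ 0) :
    ∃ p ∈ cellsD m, ∃ v < T p, IsFlaggedTableauD l m (Function.update T p v) ∧
      ExcitedMoveD l (excitedDiagramOf m (Function.update T p v)) (excitedDiagramOf m T) := by
  obtain ⟨i, j, hij, hne, hrows, hrow⟩ := exists_lexMin_of_ne_zero hT.eq_zero_of_notMem h
  by_cases hj : j = i + 1
  · subst hj
    obtain ⟨k, hk⟩ := hT.even_diag i hij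
    have hT' := hT.update_of_lexMin hl hm hij hrows hrow (v := T (i, i + 1) - 2) (by omega)
      fun _ => ⟨k - 1, by omega⟩
    exact ⟨_, hij, _, by omega, hT',
      hT.excitedMoveD_update_diag hl hm hij hrows (by omega) hT'⟩
  · have := (mem_cellsD_iff hm).1 hij
    have hT' := hT.update_of_lexMin hl hm hij hrows hrow (v := T (i, j) - 1) (by omega)
      fun h => absurd h hj
    exact ⟨_, hij, _, by omega, hT',
      hT.excitedMoveD_update_offDiag hl hm hij (by omega) hrows hrow (by omega) hT'⟩

theorem reflTransGen_excitedDiagramOf (hl : IsStrictPartition l) (hm : IsStrictPartition m)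
    (hT : IsFlaggedTableauD l m T) :
    Relation.ReflTransGen (ExcitedMoveD l) (cellsD m) (excitedDiagramOf m T) := by
  induction hs : ∑ p ∈ cellsD m, T p using Nat.strong_induction_on generalizing T with
  | _ n ih =>
    by_cases h : ∃ p ∈ cellsD m, T p ≠ 0
    · obtain ⟨p, hp, v, hv, hT', hmove⟩ := hT.exists_excitedMoveD_update hl hm h
      have hlt : ∑ q ∈ cellsD m, Function.update T p v q < n :=
        hs ▸ Finset.sum_lt_sum (fun q _ => update_le_iff.2 ⟨hv.le, fun _ _ => le_rfl⟩ q)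
          ⟨p, hp, by simpa using hv⟩
      exact (ih _ hlt hT' rfl).tail hmove
    · push Not at h
      obtain rfl : T = 0 := funext fun p =>
        if hp : p ∈ cellsD m then h p hp else hT.eq_zero_of_notMem p hp
      rw [excitedDiagramOf_zero]

end IsFlaggedTableauD

end Lowering

/-- Excited diagrams of type D are in bijection with flagged increasing tableaux with
even diagonal entries: `T ↦ {(i + T(i,j), j + T(i,j)) : (i,j) ∈ [μ]^D}`. -/
theorem statement17 (l m : ℕ → ℕ) (hl : IsStrictPartition l) (hm : IsStrictPartition m)
    (hsub : cellsD m ⊆ cellsD l) :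
    Set.BijOn
      (fun T : ℕ × ℕ → ℕ => (cellsD m).image (fun p => (p.1 + T p, p.2 + T p)))
      {T : ℕ × ℕ → ℕ |
        (∀ p, p ∉ cellsD m → T p = 0) ∧
        (∀ i j : ℕ, (i, j) ∈ cellsD m → (i, j + 1) ∈ cellsD m → T (i, j) ≤ T (i, j + 1)) ∧
        (∀ i j : ℕ, (i, j) ∈ cellsD m → (i + 1, j) ∈ cellsD m → T (i, j) ≤ T (i + 1, j)) ∧
        (∀ i : ℕ, (i, i + 1) ∈ cellsD m → Even (T (i, i + 1))) ∧
        (∀ i j : ℕ, (i, j) ∈ cellsD m → j ≤ l (i + T (i, j)) + i)}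
      ↑(ED l m) := by
  refine ⟨fun T hT => ?_, fun T₁ hT₁ T₂ hT₂ h => ?_, fun D hD => ?_⟩
  · have hT := isFlaggedTableauD_iff.2 hT
    exact mem_ED_iff.2 ⟨hT.excitedDiagramOf_subset hl hm, hT.reflTransGen_excitedDiagramOf hl hm⟩
  · exact (isFlaggedTableauD_iff.2 hT₁).eq_of_excitedDiagramOf_eq hm
      (isFlaggedTableauD_iff.2 hT₂) h
  · obtain ⟨T, hT, rfl⟩ :=
      exists_isFlaggedTableauD_of_reflTransGen hl hm hsub (mem_ED_iff.1 hD).2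
    exact ⟨T, isFlaggedTableauD_iff.1 hT, rfl⟩
end

section
/- (The flag condition need only be checked at corners.) Let λ and μ be strict partitions and let T : [μ]^B → ℤ_{≥0} satisfy T(i,j) ≤ T(i,j+1) and T(i,j) ≤ T(i+1,j) whenever both cells involved lie in [μ]^B. If j ≤ λ_{i + T(i,j)} + i − 1 holds for every corner (i,j) of μ, then j ≤ λ_{i + T(i,j)} + i − 1 holds for every cell (i,j) ∈ [μ]^B. -/
attribute [local instance] Classical.propDecidable

lemma sp_anti_s18 {l : ℕ → ℕ} (hl : IsStrictPartition l) {a b : ℕ} (ha : 1 ≤ a) (hab : a ≤ b) :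
    l b ≤ l a := by
  induction b, hab using Nat.le_induction with
  | base => exact le_rfl
  | succ b hb ih =>
    rcases hl.2 b (by omega) with ⟨h0, hpos⟩
    by_cases h : l b = 0
    · rw [h0 h]; omega
    · exact le_trans (le_of_lt (hpos h)) ih

lemma sp_strict {l : ℕ → ℕ} (hl : IsStrictPartition l) {a b : ℕ} (ha : 1 ≤ a) (hab : a < b)
    (hb : l b ≠ 0) : l b < l a := by
  have h1 : l b ≤ l (a + 1) := sp_anti_s18 hl (by omega) (by omega)
  have h2 : l a ≠ 0 := by
    intro h
    exact hb (Nat.le_zero.mp (h ▸ sp_anti_s18 hl ha (le_of_lt hab)))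
  exact lt_of_le_of_lt h1 ((hl.2 a ha).2 h2)

/-- The flag condition need only be checked at the corners of `μ`.  (The condition
`j ≤ λ_{i+T(i,j)} + i - 1` is written as `j < λ_{i+T(i,j)} + i`, which is equivalent
since `i ≥ 1`.) -/
theorem statement18 (l m : ℕ → ℕ) (hl : IsStrictPartition l) (hm : IsStrictPartition m)
    (T : ℕ × ℕ → ℕ)
    (hrow : ∀ i j : ℕ, (i, j) ∈ cellsB m → (i, j + 1) ∈ cellsB m → T (i, j) ≤ T (i, j + 1))
    (hcol : ∀ i j : ℕ, (i, j) ∈ cellsB m → (i + 1, j) ∈ cellsB m → T (i, j) ≤ T (i + 1, j))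
    (hcorner : ∀ i j : ℕ, (i, j) ∈ cellsB m → (i + 1, j) ∉ cellsB m → (i, j + 1) ∉ cellsB m →
      j < l (i + T (i, j)) + i) :
    ∀ i j : ℕ, (i, j) ∈ cellsB m → j < l (i + T (i, j)) + i := by
  suffices H : ∀ n i j, 3 * m 1 + 3 - i - j ≤ n → (i, j) ∈ cellsB m →
      j < l (i + T (i, j)) + i by
    intro i j hij; exact H _ i j le_rfl hij
  intro n
  induction n with
  | zero =>
    intro i j hn hij
    have hmem : (1 ≤ i ∧ i ≤ m 1) ∧ 1 ≤ j ∧ j ≤ 2 * m 1 + 2 := by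
      have := hij
      simp only [cellsB, Finset.mem_filter, Finset.mem_product, Finset.mem_Icc] at this
      exact ⟨this.1.1, this.1.2⟩
    omega
  | succ n ih =>
    intro i j hn hij
    have hmem : ((1 ≤ i ∧ i ≤ m 1) ∧ 1 ≤ j ∧ j ≤ 2 * m 1 + 2) ∧ i ≤ j ∧ j < m i + i := by
      have := hij
      simp only [cellsB, Finset.mem_filter, Finset.mem_product, Finset.mem_Icc] at this
      exact this
    by_cases hr : (i, j + 1) ∈ cellsB m
    · have h2 := ih i (j + 1) (by omega) hr
      have hT := hrow i j hij hr
      have hle : l (i + T (i, j + 1)) ≤ l (i + T (i, j)) :=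
        sp_anti_s18 hl (by omega) (by omega)
      omega
    · by_cases hd : (i + 1, j) ∈ cellsB m
      · have hdmem : ((1 ≤ i + 1 ∧ i + 1 ≤ m 1) ∧ 1 ≤ j ∧ j ≤ 2 * m 1 + 2) ∧
            i + 1 ≤ j ∧ j < m (i + 1) + (i + 1) := by
          have := hd
          simp only [cellsB, Finset.mem_filter, Finset.mem_product, Finset.mem_Icc] at this
          exact this
        have h2 := ih (i + 1) j (by omega) hd
        have hT := hcol i j hij hd
        by_cases hz : l (i + 1 + T (i + 1, j)) = 0
        · omega
        · have := sp_strict hl (a := i + T (i, j)) (b := i + 1 + T (i + 1, j))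
            (by omega) (by omega) hz
          omega
      · exact hcorner i j hij hd hr
end
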